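/- Let M be a tractable metric space and C ≥ 0. Then the magnitude map on nonempty compact subsets of M (with the Hausdorff metric) is C-Lipschitz if and only if the magnitude map on nonempty finite subsets of M (with the Hausdorff metric) is C-Lipschitz. -/

import Mathlib

open Metric TopologicalSpace Filter Topology Bornology
open scoped ENNReal NNReal

/-- The similarity matrix of a finite subset of a metric space. -/
noncomputable def simMatrix {X : Type*} [MetricSpace X] (s : Finset X) : Matrix s s ℝ :=
  fun i j => Real.exp (-dist (i : X) (j : X))

/-- A metric space is positive definite when every finite subspace has a positive
definite similarity matrix. -/
def IsPosDefSpace (X : Type*) [MetricSpace X] : Prop :=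
  ∀ s : Finset X, (simMatrix s).PosDef

/-- The magnitude of a finite subset of a metric space: the sum of the entries of the
inverse of its similarity matrix. -/
noncomputable def finMag {X : Type*} [MetricSpace X] (s : Finset X) : ℝ :=
  letI : DecidableEq X := Classical.decEq X
  ∑ i, ∑ j, (simMatrix s)⁻¹ i j

/-- The magnitude of a (compact) subset of a metric space, valued in `[0, ∞]`:
the supremum of the magnitudes of its finite subsets. -/
noncomputable def cMagE {X : Type*} [MetricSpace X] (K : Set X) : ℝ≥0∞ :=
  ⨆ (s : Finset X) (_ : (s : Set X) ⊆ K), ENNReal.ofReal (finMag s)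

/-- The real-valued magnitude of a (compact) subset of a metric space. -/
noncomputable def cMag {X : Type*} [MetricSpace X] (K : Set X) : ℝ :=
  (cMagE K).toReal

/-- A metric space is tractable when it is positive definite and all of its closed balls
are compact and of finite magnitude. -/
def Tractable (X : Type*) [MetricSpace X] : Prop :=
  IsPosDefSpace X ∧ (∀ (x : X) (r : ℝ), IsCompact (closedBall x r)) ∧
    ∀ (x : X) (r : ℝ), cMagE (closedBall x r) < ⊤

/-!
Restricting a Lipschitz map is Lipschitz, which gives one direction. Conversely, if
`δ > d_H(K, L)`, every finite `s ⊆ K` can be moved point by point to a finite `t ⊆ L`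
with `d_H(s, t) ≤ δ`, so `mg s ≤ mg t + C δ ≤ mg L + C δ` (magnitude is monotone on
bounded sets of a tractable space). Taking the supremum over `s` and letting `δ ↓ d_H(K, L)`
gives `mg K ≤ mg L + C d_H(K, L)`.
-/

section Magnitude

variable {X : Type*} [MetricSpace X]

lemma cMagE_mono {K L : Set X} (h : K ⊆ L) : cMagE K ≤ cMagE L :=
  iSup₂_le fun s hs => le_iSup₂_of_le s (hs.trans h) le_rfl

lemma ofReal_finMag_le_cMagE {K : Set X} {s : Finset X} (hs : ↑s ⊆ K) :
    ENNReal.ofReal (finMag s) ≤ cMagE K :=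
  le_iSup₂_of_le s hs le_rfl

lemma cMag_le_of_forall_finMag_le {K : Set X} {r : ℝ} (hr : 0 ≤ r)
    (h : ∀ s : Finset X, ↑s ⊆ K → s.Nonempty → finMag s ≤ r) : cMag K ≤ r := by
  refine ENNReal.toReal_le_of_le_ofReal hr (iSup₂_le fun s hs => ?_)
  rcases s.eq_empty_or_nonempty with rfl | hne
  · simp [finMag]
  · exact ENNReal.ofReal_le_ofReal (h s hs hne)

lemma Tractable.cMagE_lt_top (hX : Tractable X) {K : Set X} (hK : IsBounded K)
    (hne : K.Nonempty) : cMagE K < ⊤ := by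
  obtain ⟨r, hr⟩ := hK.subset_closedBall hne.some
  exact (cMagE_mono hr).trans_lt (hX.2.2 _ r)

lemma Tractable.cMag_mono (hX : Tractable X) {K L : Set X} (hL : IsBounded L)
    (hK : K.Nonempty) (h : K ⊆ L) : cMag K ≤ cMag L :=
  ENNReal.toReal_mono (hX.cMagE_lt_top hL (hK.mono h)).ne (cMagE_mono h)

lemma Tractable.finMag_le_cMag (hX : Tractable X) {K : Set X} (hK : IsBounded K)
    {s : Finset X} (hs : ↑s ⊆ K) (hne : s.Nonempty) : finMag s ≤ cMag K :=
  (ENNReal.ofReal_le_iff_le_toReal (hX.cMagE_lt_top hK (hne.to_set.mono hs)).ne).1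
    (ofReal_finMag_le_cMagE hs)

lemma Finset.exists_subset_hausdorffDist_le {K L : Set X} {δ : ℝ} (hδ : 0 ≤ δ)
    (hKL : ∀ x ∈ K, ∃ y ∈ L, dist x y ≤ δ) {s : Finset X} (hs : ↑s ⊆ K) (hne : s.Nonempty) :
    ∃ t : Finset X, t.Nonempty ∧ ↑t ⊆ L ∧ hausdorffDist (s : Set X) t ≤ δ := by
  classical
  choose! f hfL hfδ using hKL
  refine ⟨s.image f, hne.image f, ?_, hausdorffDist_le_of_mem_dist hδ ?_ ?_⟩
  · simpa [Set.subset_def] using fun x hx => hfL x (hs hx)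
  · exact fun x hx => ⟨f x, Finset.mem_coe.2 (Finset.mem_image_of_mem f hx), hfδ x (hs hx)⟩
  · simp only [Finset.coe_image, Set.forall_mem_image]
    exact fun x hx => ⟨x, hx, by rw [dist_comm]; exact hfδ x (hs hx)⟩

def Finset.toFiniteNonemptyCompacts (s : Finset X) (hs : s.Nonempty) :
    {K : NonemptyCompacts X // (K : Set X).Finite} :=
  ⟨⟨⟨s, s.finite_toSet.isCompact⟩, hs.to_set⟩, s.finite_toSet⟩

lemma Tractable.cMag_le_add_mul_of_dist_lt (hX : Tractable X) {C : ℝ≥0}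
    (h : LipschitzWith C (fun F : {K : NonemptyCompacts X // (K : Set X).Finite} =>
      cMag ((F : NonemptyCompacts X) : Set X)))
    {K L : NonemptyCompacts X} {δ : ℝ} (hδ : dist K L < δ) :
    cMag (K : Set X) ≤ cMag (L : Set X) + C * δ := by
  have hδ0 : 0 ≤ δ := dist_nonneg.trans hδ.le
  rw [NonemptyCompacts.dist_eq] at hδ
  have hKL : ∀ x ∈ (K : Set X), ∃ y ∈ (L : Set X), dist x y ≤ δ := fun x hx =>
    have hfin := hausdorffEDist_ne_top_of_nonempty_of_bounded K.nonempty L.nonempty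
      K.isCompact.isBounded L.isCompact.isBounded
    (exists_dist_lt_of_hausdorffDist_lt hx hδ hfin).imp fun _ hy => ⟨hy.1, hy.2.le⟩
  refine cMag_le_of_forall_finMag_le (add_nonneg ENNReal.toReal_nonneg (by positivity))
    fun s hsK hs => ?_
  obtain ⟨t, ht, htL, hst⟩ := Finset.exists_subset_hausdorffDist_le hδ0 hKL hsK hs
  calc finMag s ≤ cMag (s : Set X) := hX.finMag_le_cMag s.finite_toSet.isBounded subset_rfl hs
    _ ≤ cMag (t : Set X) + C * hausdorffDist (s : Set X) t :=
      h.le_add_mul (s.toFiniteNonemptyCompacts hs) (t.toFiniteNonemptyCompacts ht)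
    _ ≤ cMag (L : Set X) + C * δ := by
      gcongr
      exact hX.cMag_mono L.isCompact.isBounded ht.to_set htL

lemma Tractable.cMag_le_add_mul_dist (hX : Tractable X) {C : ℝ≥0}
    (h : LipschitzWith C (fun F : {K : NonemptyCompacts X // (K : Set X).Finite} =>
      cMag ((F : NonemptyCompacts X) : Set X)))
    (K L : NonemptyCompacts X) : cMag (K : Set X) ≤ cMag (L : Set X) + C * dist K L := by
  have hlim : Tendsto (fun δ : ℝ => cMag (L : Set X) + C * δ) (𝓝[>] dist K L)
      (𝓝 (cMag (L : Set X) + C * dist K L)) :=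
    (Continuous.tendsto (by fun_prop) _).mono_left nhdsWithin_le_nhds
  exact ge_of_tendsto hlim
    (eventually_nhdsWithin_of_forall fun _ hδ => hX.cMag_le_add_mul_of_dist_lt h hδ)

end Magnitude

/-- For a tractable metric space `M` and `C ≥ 0`, the magnitude map on
nonempty compact subsets is `C`-Lipschitz iff the magnitude map on nonempty finite
subsets is `C`-Lipschitz. -/
theorem stmt_12 {M : Type*} [MetricSpace M] (hM : Tractable M) (C : ℝ≥0) :
    LipschitzWith C (fun K : NonemptyCompacts M => cMag (K : Set M)) ↔
      LipschitzWith C (fun F : {K : NonemptyCompacts M // (K : Set M).Finite} =>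
        cMag ((F : NonemptyCompacts M) : Set M)) :=
  ⟨fun h => h.restrict {K : NonemptyCompacts M | (K : Set M).Finite},
    fun h => LipschitzWith.of_le_add_mul C (hM.cMag_le_add_mul_dist h)⟩
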